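/- arXiv:1105.0871 — 2 statements merged into one kernel-verified Lean document; each statement's English description precedes it below -/
import Mathlib

section
/- Let T ~ Binomial(N, p) and for each observed value t define b(t, N, α) as the unique solution in (0,1) of Σ_{k=0}^{t} C(N,k) b^k (1−b)^{N−k} = α when t < N, and b(N, N, α) = 1. Then P(p ≤ b(T, N, α)) ≥ 1 − α. -/
/-!
The binomial CDF `y ↦ ∑_{k ≤ t} C(N,k) y^k (1-y)^(N-k)` is a sum of Bernstein polynomials whose
derivative telescopes to `-N C(N-1,t) y^t (1-y)^(N-1-t) ≤ 0`, so it is antitone on `[0,1]`.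
If `m` is the largest value with `b m < p` (necessarily `m < N`, as `b N = 1`), every miss
`b t < p` has `t ≤ m`, so the miss probability is at most the CDF at `p`, which is at most the
CDF at `b m`, namely `α`.
-/
open Polynomial Finset

namespace bernsteinPolynomial

theorem derivative_sum_range (R : Type*) [CommRing R] (n t : ℕ) :
    derivative (∑ k ∈ range (t + 1), bernsteinPolynomial R n k) =
      -n * bernsteinPolynomial R (n - 1) t := by
  induction t with
  | zero => simp [derivative_zero]
  | succ t ih => rw [sum_range_succ, derivative_add, ih, derivative_succ]; ring

theorem eval_eq {R : Type*} [CommRing R] (n ν : ℕ) (x : R) :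
    (bernsteinPolynomial R n ν).eval x = n.choose ν * x ^ ν * (1 - x) ^ (n - ν) := by
  simp [bernsteinPolynomial]

theorem eval_nonneg {n ν : ℕ} {x : ℝ} (hx : x ∈ Set.Icc 0 1) :
    0 ≤ (bernsteinPolynomial ℝ n ν).eval x := by
  have h1x : 0 ≤ 1 - x := sub_nonneg.mpr hx.2
  have hx0 := hx.1
  rw [eval_eq]
  positivity

theorem antitoneOn_eval_sum_range (n t : ℕ) :
    AntitoneOn (fun x ↦ (∑ k ∈ range (t + 1), bernsteinPolynomial ℝ n k).eval x)
      (Set.Icc 0 1) := by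
  refine antitoneOn_of_deriv_nonpos (convex_Icc 0 1) (Polynomial.continuousOn _)
    (Polynomial.differentiableOn _) fun x hx ↦ ?_
  rw [Polynomial.deriv, derivative_sum_range, eval_mul]
  simp only [eval_neg, eval_natCast, neg_mul, neg_nonpos]
  exact mul_nonneg n.cast_nonneg (eval_nonneg (interior_subset hx))

theorem eval_sum_range (R : Type*) [CommRing R] (n : ℕ) (x : R) :
    ∑ ν ∈ range (n + 1), (bernsteinPolynomial R n ν).eval x = 1 := by
  rw [← eval_finsetSum, bernsteinPolynomial.sum, eval_one]

end bernsteinPolynomial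

theorem sum_eval_bernsteinPolynomial_filter_lt_le {n : ℕ} {α p : ℝ} {b : ℕ → ℝ}
    (hp : p ∈ Set.Icc 0 1) (hα : 0 ≤ α)
    (hb : ∀ t < n, b t ∈ Set.Icc 0 1 ∧
      (∑ k ∈ range (t + 1), bernsteinPolynomial ℝ n k).eval (b t) = α)
    (hbn : p ≤ b n) :
    ∑ t ∈ range (n + 1) with b t < p, (bernsteinPolynomial ℝ n t).eval p ≤ α := by
  set S := {t ∈ range (n + 1) | b t < p}
  obtain hS | hS := S.eq_empty_or_nonempty
  · simpa [hS] using hα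
  obtain ⟨hm_range, hbm⟩ := mem_filter.mp (S.max'_mem hS)
  set m := S.max' hS
  have hmn : m < n := by
    have hm_ne : m ≠ n := fun h ↦ (h ▸ hbm).not_ge hbn
    have := mem_range.mp hm_range
    omega
  obtain ⟨hbm_mem, hcdf⟩ := hb m hmn
  calc ∑ t ∈ S, (bernsteinPolynomial ℝ n t).eval p
      ≤ ∑ t ∈ range (m + 1), (bernsteinPolynomial ℝ n t).eval p :=
        sum_le_sum_of_subset_of_nonneg
          (fun t ht ↦ mem_range.mpr (Nat.lt_succ_of_le (S.le_max' t ht)))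
          fun t _ _ ↦ bernsteinPolynomial.eval_nonneg hp
    _ = (∑ k ∈ range (m + 1), bernsteinPolynomial ℝ n k).eval p := (eval_finsetSum ..).symm
    _ ≤ (∑ k ∈ range (m + 1), bernsteinPolynomial ℝ n k).eval (b m) :=
        bernsteinPolynomial.antitoneOn_eval_sum_range n m hbm_mem hp hbm.le
    _ = α := hcdf

theorem clopper_pearson_upper_bound_coverage_general
    (N : ℕ) (α : ℝ) (hα : α ∈ Set.Ioo (0:ℝ) 1)
    (p : ℝ) (hp : p ∈ Set.Icc (0:ℝ) 1)
    (b : ℕ → ℝ)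
    (hb : ∀ t, t < N → b t ∈ Set.Ioo (0:ℝ) 1 ∧
      ∑ k ∈ Finset.range (t + 1),
        (N.choose k : ℝ) * (b t) ^ k * (1 - b t) ^ (N - k) = α)
    (hbN : b N = 1) :
    1 - α ≤
      ∑ t ∈ Finset.range (N + 1),
        (if p ≤ b t then (N.choose t : ℝ) * p ^ t * (1 - p) ^ (N - t) else 0) := by
  have hcdf (t : ℕ) (ht : t < N) : b t ∈ Set.Icc 0 1 ∧
      (∑ k ∈ range (t + 1), bernsteinPolynomial ℝ N k).eval (b t) = α := by
    obtain ⟨hbt, hsum⟩ := hb t ht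
    refine ⟨Set.Ioo_subset_Icc_self hbt, ?_⟩
    simpa [eval_finsetSum, bernsteinPolynomial.eval_eq] using hsum
  have hmiss := sum_eval_bernsteinPolynomial_filter_lt_le hp hα.1.le hcdf (hbN ▸ hp.2)
  have hsplit := sum_filter_add_sum_filter_not (range (N + 1)) (fun t ↦ p ≤ b t)
    fun t ↦ (bernsteinPolynomial ℝ N t).eval p
  simp only [not_le, bernsteinPolynomial.eval_sum_range] at hsplit
  rw [← sum_filter]
  simp only [bernsteinPolynomial.eval_eq] at hsplit hmiss
  linarith

/-- Clopper–Pearson upper confidence bound coverage: if `b t` solves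
`∑_{k=0}^{t} C(N,k) (b t)^k (1 - b t)^{N-k} = α` for every `t < N`, and `b N = 1`,
then the probability (under `T ~ Binomial(N,p)`) of the event `p ≤ b T` is at
least `1 - α`. The probability is expressed as the sum over the values of `T`. -/
theorem clopper_pearson_upper_bound_coverage
    (N : ℕ) (hN : 1 ≤ N) (α : ℝ) (hα : α ∈ Set.Ioo (0:ℝ) 1)
    (p : ℝ) (hp : p ∈ Set.Icc (0:ℝ) 1)
    (b : ℕ → ℝ)
    (hb : ∀ t, t < N → b t ∈ Set.Ioo (0:ℝ) 1 ∧
      ∑ k ∈ Finset.range (t + 1),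
        (N.choose k : ℝ) * (b t) ^ k * (1 - b t) ^ (N - k) = α)
    (hbN : b N = 1) :
    1 - α ≤
      ∑ t ∈ Finset.range (N + 1),
        (if p ≤ b t then (N.choose t : ℝ) * p ^ t * (1 - p) ^ (N - t) else 0) :=
  clopper_pearson_upper_bound_coverage_general N α hα p hp b hb hbN
end

section
/- Let X be an E-valued random variable, f : E → ℝ measurable, ρ ∈ ℝ, and suppose R̂ ⊇ {x : f(x) < ρ}. Let Z_1,...,Z_m be i.i.d. with law P_X(·|R̂) (assuming P_X(R̂) > 0). Then for α ∈ (0,1), P( π_ρ ≤ b(Σ_{k=1}^m 1{f(Z_k)<ρ}, m, α) · P_X(R̂) ) ≥ 1 − α, where π_ρ = P(f(X) < ρ) and b is the exact binomial upper confidence bound. -/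
open MeasureTheory ProbabilityTheory

/-! The number `T` of samples `Z_k` in `A = {f < ρ}` is Binomial(m, q) with `q = P_X(A | R̂)`, and
`π_ρ = q · P_X(R̂)` because `A ⊆ R̂`. The binomial CDF `F_t(q) = P(T ≤ t)` is antitone in `q`
(its derivative is `-m · B_{m-1,t}(q)`, a Bernstein polynomial). The bound fails, `b(T) < q`, only
if `T ≤ t*`, the largest `t` with `b(t) < q`; since `b(m) = 1`, `t* < m`, and this event has
probability `F_{t*}(q) ≤ F_{t*}(b(t*)) = α`. -/

open Polynomial Finset in
noncomputable def binomialCDF (R : Type*) [CommRing R] (n t : ℕ) : R[X] :=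
  ∑ ν ∈ range (t + 1), bernsteinPolynomial R n ν

namespace binomialCDF

open Polynomial Finset

variable {R : Type*} [CommRing R]

theorem eval_eq (n t : ℕ) (x : R) :
    (binomialCDF R n t).eval x =
      ∑ ν ∈ range (t + 1), (n.choose ν : R) * x ^ ν * (1 - x) ^ (n - ν) := by
  simp [binomialCDF, bernsteinPolynomial, eval_finsetSum]

theorem derivative_eq (n t : ℕ) :
    derivative (binomialCDF R n t) = -n * bernsteinPolynomial R (n - 1) t := by
  induction t with
  | zero => simp [binomialCDF, bernsteinPolynomial.derivative_zero]
  | succ t ih =>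
    rw [binomialCDF, sum_range_succ, derivative_add, ← binomialCDF, ih,
      bernsteinPolynomial.derivative_succ]
    ring

theorem antitoneOn_eval (n t : ℕ) :
    AntitoneOn (fun x : ℝ => (binomialCDF ℝ n t).eval x) (Set.Icc 0 1) := by
  refine antitoneOn_of_deriv_nonpos (convex_Icc 0 1) (binomialCDF ℝ n t).continuousOn
    (binomialCDF ℝ n t).differentiableOn fun x hx => ?_
  rw [interior_Icc] at hx
  have : 0 ≤ (bernsteinPolynomial ℝ (n - 1) t).eval x := by
    simp only [bernsteinPolynomial, eval_mul, eval_pow, eval_sub, eval_one, eval_X, eval_natCast]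
    exact mul_nonneg (mul_nonneg (Nat.cast_nonneg _) (pow_nonneg hx.1.le _))
      (pow_nonneg (sub_nonneg.2 hx.2.le) _)
  rw [Polynomial.deriv, derivative_eq]
  simp only [eval_mul, eval_neg, eval_natCast, neg_mul, neg_nonpos]
  exact mul_nonneg n.cast_nonneg this

end binomialCDF

open Finset

section Hits

open scoped Classical

variable {Ω ι E : Type*} [Fintype ι] {Z : ι → Ω → E} {A : Set E}

theorem setOf_hits_eq (s : Finset ι) :
    {ω | ({i | Z i ω ∈ A} : Finset ι) = s} = ⋂ i, Z i ⁻¹' (if i ∈ s then A else Aᶜ) := by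
  ext ω
  simp only [Set.mem_ofPred_eq, Finset.ext_iff, mem_filter, mem_univ, true_and, Set.mem_iInter,
    Set.mem_preimage]
  refine forall_congr' fun i => ?_
  split_ifs with hi <;> simp [hi]

variable [MeasurableSpace Ω] [MeasurableSpace E]

theorem measurableSet_hits_preimage (hZ : ∀ i, Measurable (Z i)) (hA : MeasurableSet A)
    (S : Set (Finset ι)) :
    MeasurableSet ((fun ω => ({i | Z i ω ∈ A} : Finset ι)) ⁻¹' S) := by
  rw [← Set.biUnion_preimage_singleton]
  refine .biUnion S.to_countable fun s _ => ?_
  change MeasurableSet {ω | ({i | Z i ω ∈ A} : Finset ι) = s}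
  rw [setOf_hits_eq]
  exact .iInter fun i => hZ i (by split_ifs <;> simp [hA])

variable {P : Measure Ω} [IsProbabilityMeasure P] {p : ℝ}

theorem measureReal_hits_eq (hZ : ∀ i, Measurable (Z i)) (hindep : iIndepFun Z P)
    (hA : MeasurableSet A) (hp : ∀ i, P.real (Z i ⁻¹' A) = p) (s : Finset ι) :
    P.real {ω | ({i | Z i ω ∈ A} : Finset ι) = s} = p ^ #s * (1 - p) ^ (Fintype.card ι - #s) := by
  have hsets : ∀ i ∈ (univ : Finset ι), MeasurableSet (if i ∈ s then A else Aᶜ) := fun i _ => by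
    split_ifs <;> simp [hA]
  have hfactor : ∀ i, P.real (Z i ⁻¹' if i ∈ s then A else Aᶜ) = if i ∈ s then p else 1 - p := by
    intro i
    split_ifs
    · exact hp i
    · rw [Set.preimage_compl, measureReal_compl (hZ i hA), probReal_univ, hp i]
  have hprod := hindep.measure_inter_preimage_eq_mul univ hsets
  simp only [mem_univ, Set.iInter_true] at hprod
  rw [setOf_hits_eq, measureReal_def, hprod, ENNReal.toReal_prod]
  simp only [← measureReal_def, hfactor]
  rw [prod_ite, prod_const, prod_const, filter_not, filter_mem_eq_inter, univ_inter,
    card_sdiff_of_subset (subset_univ s), card_univ]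

theorem measureReal_card_hits_eq (hZ : ∀ i, Measurable (Z i)) (hindep : iIndepFun Z P)
    (hA : MeasurableSet A) (hp : ∀ i, P.real (Z i ⁻¹' A) = p) (j : ℕ) :
    P.real {ω | #{i | Z i ω ∈ A} = j} = (bernsteinPolynomial ℝ (Fintype.card ι) j).eval p := by
  have hfibre : {ω | #{i | Z i ω ∈ A} = j} =
      (fun ω => ({i | Z i ω ∈ A} : Finset ι)) ⁻¹' ↑(powersetCard j (univ : Finset ι)) := by
    ext ω
    simp
  rw [hfibre,
    ← sum_measureReal_preimage_singleton _ fun s _ => measurableSet_hits_preimage hZ hA {s}]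
  simp only [Set.preimage, Set.mem_singleton_iff]
  rw [sum_congr rfl fun s hs => by
    rw [measureReal_hits_eq hZ hindep hA hp s, (mem_powersetCard_univ.1 hs)]]
  simp [bernsteinPolynomial, card_powersetCard, mul_assoc]

theorem measureReal_card_hits_le (hZ : ∀ i, Measurable (Z i)) (hindep : iIndepFun Z P)
    (hA : MeasurableSet A) (hp : ∀ i, P.real (Z i ⁻¹' A) = p) (t : ℕ) :
    P.real {ω | #{i | Z i ω ∈ A} ≤ t} = (binomialCDF ℝ (Fintype.card ι) t).eval p := by
  have hfibre : {ω | #{i | Z i ω ∈ A} ≤ t} =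
      (fun ω => #({i | Z i ω ∈ A} : Finset ι)) ⁻¹' ↑(range (t + 1)) := by
    ext ω
    simp
  rw [hfibre, ← sum_measureReal_preimage_singleton, binomialCDF, Polynomial.eval_finsetSum]
  · exact sum_congr rfl fun j _ => measureReal_card_hits_eq hZ hindep hA hp j
  · exact fun j _ => measurableSet_hits_preimage hZ hA {s | #s = j}

end Hits

theorem one_sub_le_prob_compl {Ω : Type*} [MeasurableSpace Ω] {P : Measure Ω}
    [IsProbabilityMeasure P] (s : Set Ω) : 1 - P s ≤ P sᶜ := by
  rw [tsub_le_iff_left, ← measure_univ (μ := P)]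
  exact measure_univ_le_add_compl s

theorem measure_upperConfidenceBound_lt_le {Ω : Type*} [MeasurableSpace Ω] {P : Measure Ω}
    {n : ℕ} {T : Ω → ℕ} {p α : ℝ} {b : ℕ → ℝ} (hT : ∀ ω, T ω ≤ n) (hp : p ∈ Set.Icc 0 1)
    (hcdf : ∀ t < n, P {ω | T ω ≤ t} ≤ ENNReal.ofReal ((binomialCDF ℝ n t).eval p))
    (hb : ∀ t < n, 0 ≤ b t ∧ (binomialCDF ℝ n t).eval (b t) ≤ α) (hbn : p ≤ b n) :
    P {ω | b (T ω) < p} ≤ ENNReal.ofReal α := by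
  classical
  set S := {t ∈ range (n + 1) | b t < p}
  have hmemS : ∀ ω, b (T ω) < p → T ω ∈ S := fun ω hω =>
    mem_filter.2 ⟨mem_range_succ_iff.2 (hT ω), hω⟩
  rcases S.eq_empty_or_nonempty with hS | hS
  · have hbad : {ω | b (T ω) < p} = ∅ :=
      Set.eq_empty_of_forall_notMem fun ω hω => by simpa [hS] using hmemS ω hω
    simp [hbad]
  obtain ⟨t, htS, htmax⟩ := S.exists_max_image id hS
  obtain ⟨ht_le, hbt⟩ := mem_filter.1 htS
  have ht : t < n := lt_of_le_of_ne (mem_range_succ_iff.1 ht_le) fun h => (h ▸ hbt).not_ge hbn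
  obtain ⟨hbt_nonneg, hbt_cdf⟩ := hb t ht
  calc P {ω | b (T ω) < p} ≤ P {ω | T ω ≤ t} := measure_mono fun ω hω => htmax _ (hmemS ω hω)
    _ ≤ ENNReal.ofReal ((binomialCDF ℝ n t).eval p) := hcdf t ht
    _ ≤ ENNReal.ofReal ((binomialCDF ℝ n t).eval (b t)) := ENNReal.ofReal_le_ofReal <|
      binomialCDF.antitoneOn_eval n t ⟨hbt_nonneg, hbt.le.trans hp.2⟩ hp hbt.le
    _ ≤ ENNReal.ofReal α := ENNReal.ofReal_le_ofReal hbt_cdf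

theorem importance_sampling_confidence_bound_deterministic_general
    {Ω E : Type*} [MeasurableSpace Ω] [MeasurableSpace E]
    (P : Measure Ω) [IsProbabilityMeasure P]
    (X : Ω → E) (hX : Measurable X)
    (R : Set E) (hR : MeasurableSet R) (hRpos : 0 < P.map X R)
    (f : E → ℝ) (hf : Measurable f) (ρ : ℝ)
    (hsub : f ⁻¹' Set.Iio ρ ⊆ R)
    (m : ℕ)
    (Z : Fin m → Ω → E) (hZmeas : ∀ k, Measurable (Z k))
    (hZlaw : ∀ k, P.map (Z k) = (P.map X)[|R])
    (hZindep : iIndepFun Z P)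
    (α : ℝ)
    (b : ℕ → ℝ)
    (hb : ∀ t, t < m → b t ∈ Set.Ioo (0:ℝ) 1 ∧
      ∑ k ∈ Finset.range (t + 1),
        (m.choose k : ℝ) * (b t) ^ k * (1 - b t) ^ (m - k) = α)
    (hbm : b m = 1) :
    1 - ENNReal.ofReal α ≤
      P {ω | (P {ω' | f (X ω') < ρ}).toReal ≤
        b (∑ k, if f (Z k ω) < ρ then (1:ℕ) else 0) * ((P.map X) R).toReal} := by
  classical
  set μ := P.map X
  have : IsProbabilityMeasure μ := Measure.isProbabilityMeasure_map hX.aemeasurable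
  have : IsProbabilityMeasure μ[|R] := cond_isProbabilityMeasure hRpos.ne'
  set A := f ⁻¹' Set.Iio ρ
  have hA : MeasurableSet A := hf measurableSet_Iio
  set p := μ[|R].real A
  have hZA : ∀ k, P.real (Z k ⁻¹' A) = p := fun k => by
    rw [← map_measureReal_apply (hZmeas k) hA, hZlaw k]
  have hπ : P.real {ω | f (X ω) < ρ} = p * μ.real R := by
    change (P _).toReal = (μ[|R] A).toReal * (μ R).toReal
    rw [← ENNReal.toReal_mul, cond_mul_eq_inter hR, Set.inter_eq_self_of_subset_right hsub,
      Measure.map_apply hX hA]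
    rfl
  have hcount : ∀ ω, (∑ k, if f (Z k ω) < ρ then 1 else 0) = #{k | Z k ω ∈ A} := fun ω => by
    rw [card_filter]
    rfl
  have hbad : P {ω | b (#{k | Z k ω ∈ A}) < p} ≤ ENNReal.ofReal α := by
    refine measure_upperConfidenceBound_lt_le (n := m)
      (fun ω => (card_le_univ _).trans_eq (Fintype.card_fin m))
      ⟨measureReal_nonneg, measureReal_le_one⟩
      (fun t _ => ?_) (fun t ht => ⟨(hb t ht).1.1.le, ?_⟩) (by rw [hbm]; exact measureReal_le_one)
    · rw [← ofReal_measureReal, measureReal_card_hits_le hZmeas hZindep hA hZA, Fintype.card_fin]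
    · rw [binomialCDF.eval_eq, (hb t ht).2]
  calc 1 - ENNReal.ofReal α ≤ 1 - P {ω | b (#{k | Z k ω ∈ A}) < p} := tsub_le_tsub_left hbad 1
    _ ≤ P {ω | b (#{k | Z k ω ∈ A}) < p}ᶜ := one_sub_le_prob_compl _
    _ ≤ _ := measure_mono fun ω hω => by
      simp only [Set.mem_compl_iff, Set.mem_ofPred_eq, not_lt] at hω
      simp only [Set.mem_ofPred_eq, hcount, ← measureReal_def, hπ]
      exact mul_le_mul_of_nonneg_right hω measureReal_nonneg

/-- Confidence bound for the deterministic function case: if `{x : f(x) < ρ} ⊆ R̂`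
and `Z_1, ..., Z_m` are i.i.d. with law `P_X(·|R̂)`, then with `b` the exact
binomial upper confidence bound,
`P(π_ρ ≤ b(∑_k 1{f(Z_k)<ρ}, m, α) · P_X(R̂)) ≥ 1 - α` where `π_ρ = P(f(X) < ρ)`. -/
theorem importance_sampling_confidence_bound_deterministic
    {Ω E : Type*} [MeasurableSpace Ω] [MeasurableSpace E]
    (P : Measure Ω) [IsProbabilityMeasure P]
    (X : Ω → E) (hX : Measurable X)
    (R : Set E) (hR : MeasurableSet R) (hRpos : 0 < P.map X R)
    (f : E → ℝ) (hf : Measurable f) (ρ : ℝ)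
    (hsub : f ⁻¹' Set.Iio ρ ⊆ R)
    (m : ℕ) (hm : 1 ≤ m)
    (Z : Fin m → Ω → E) (hZmeas : ∀ k, Measurable (Z k))
    (hZlaw : ∀ k, P.map (Z k) = (P.map X)[|R])
    (hZindep : iIndepFun Z P)
    (α : ℝ) (hα : α ∈ Set.Ioo (0:ℝ) 1)
    (b : ℕ → ℝ)
    (hb : ∀ t, t < m → b t ∈ Set.Ioo (0:ℝ) 1 ∧
      ∑ k ∈ Finset.range (t + 1),
        (m.choose k : ℝ) * (b t) ^ k * (1 - b t) ^ (m - k) = α)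
    (hbm : b m = 1) :
    1 - ENNReal.ofReal α ≤
      P {ω | (P {ω' | f (X ω') < ρ}).toReal ≤
        b (∑ k, if f (Z k ω) < ρ then (1:ℕ) else 0) * ((P.map X) R).toReal} :=
  importance_sampling_confidence_bound_deterministic_general P X hX R hR hRpos f hf ρ hsub m Z
    hZmeas hZlaw hZindep α b hb hbm
end
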